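/- Let C be an exact inverse category and f : A → B a morphism of C. Then P(f) ∘ P′(f) ∘ P(f) = P(f) as functions P(A) → P(B), and P′(f) ∘ P(f) ∘ P′(f) = P′(f) as functions P(B) → P(A). -/

import Mathlib

/-!
In an inverse category idempotents commute, so projections on `A` form a poset `P(A)`.
In an exact inverse category every projection is closed, `j′′ = j`, hence
`g ≤ (j′ f)′` says exactly that `j f g = f g`; from this, `P(f) ⊣ P′(f)` is a Galois
connection: `f i f* ≤ j ↔ i ≤ (j′ f)′`. Both identities are the laws
`l ∘ u ∘ l = l` and `u ∘ l ∘ u = u` of a Galois connection.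
-/

open CategoryTheory CategoryTheory.Limits

universe v u

/-- An operation assigning to each morphism a morphism in the opposite direction. -/
def MorphismOp (C : Type u) [Category.{v} C] : Type (max u v) :=
  ∀ {A B : C}, (A ⟶ B) → (B ⟶ A)

variable {C : Type u} [Category.{v} C]

/-- `s` is an involution: a contravariant endofunctor which is the identity on objects
and involutive on morphisms. -/
def IsInvolution (s : MorphismOp C) : Prop :=
  (∀ {A B D : C} (f : A ⟶ B) (g : B ⟶ D), s (f ≫ g) = s g ≫ s f) ∧
  (∀ A : C, s (𝟙 A) = 𝟙 A) ∧
  (∀ {A B : C} (f : A ⟶ B), s (s f) = f)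

/-- A projection on `A` is an idempotent endomorphism fixed by the involution `s`. -/
def IsProjection (s : MorphismOp C) {A : C} (i : A ⟶ A) : Prop :=
  i ≫ i = i ∧ s i = i

/-- `g` is a Moore–Penrose generalized inverse of `f` with respect to `s`:
`f g f = f`, `g f g = g`, `(f g)* = f g`, `(g f)* = g f`. -/
def IsMoorePenrose (s : MorphismOp C) {A B : C} (f : A ⟶ B) (g : B ⟶ A) : Prop :=
  f ≫ g ≫ f = f ∧ g ≫ f ≫ g = g ∧ s (f ≫ g) = f ≫ g ∧ s (g ≫ f) = g ≫ f

/-- `inv` makes `C` an inverse category: each morphism `f` has `inv f` as its unique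
generalized inverse (`f ∘ (inv f) ∘ f = f` and `(inv f) ∘ f ∘ (inv f) = inv f`). -/
def IsInverseOp (inv : MorphismOp C) : Prop :=
  ∀ {A B : C} (f : A ⟶ B),
    (f ≫ inv f ≫ f = f ∧ inv f ≫ f ≫ inv f = inv f) ∧
    ∀ g : B ⟶ A, f ≫ g ≫ f = f → g ≫ f ≫ g = g → g = inv f

/-- `u` is a kernel of `f`. -/
def IsKernelOf [HasZeroMorphisms C] {K A B : C} (u : K ⟶ A) (f : A ⟶ B) : Prop :=
  u ≫ f = 0 ∧ ∀ {X : C} (g : X ⟶ A), g ≫ f = 0 → ∃! h : X ⟶ K, h ≫ u = g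

/-- `v` is a cokernel of `f`. -/
def IsCokernelOf [HasZeroMorphisms C] {A B Q : C} (v : B ⟶ Q) (f : A ⟶ B) : Prop :=
  f ≫ v = 0 ∧ ∀ {X : C} (g : B ⟶ X), f ≫ g = 0 → ∃! h : Q ⟶ X, v ≫ h = g

/-- An exact category (in the sense of the paper): a category with a zero object,
kernels and cokernels, in which every monomorphism is a kernel, every epimorphism is a
cokernel, and every morphism factors as a monomorphism composed with an epimorphism. -/
structure IsExactCategory (C : Type u) [Category.{v} C] [HasZeroObject C]
    [HasZeroMorphisms C] : Prop where
  hasKernels : ∀ {A B : C} (f : A ⟶ B), ∃ (K : C) (u : K ⟶ A), IsKernelOf u f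
  hasCokernels : ∀ {A B : C} (f : A ⟶ B), ∃ (Q : C) (v : B ⟶ Q), IsCokernelOf v f
  normal : ∀ {X A : C} (u : X ⟶ A), Mono u → ∃ (B : C) (f : A ⟶ B), IsKernelOf u f
  conormal : ∀ {A B : C} (v : A ⟶ B), Epi v → ∃ (X : C) (f : X ⟶ A), IsCokernelOf v f
  monoEpiFact : ∀ {A B : C} (f : A ⟶ B),
    ∃ (I : C) (q : A ⟶ I) (p : I ⟶ B), Epi q ∧ Mono p ∧ q ≫ p = f

/-- A Baer*-structure on `C` with respect to `s`: each morphism `f` has a projection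
`f′ = prj f` on its domain with `f ∘ g = 0` iff `g` factors through `f′`. -/
structure BaerStar (C : Type u) [Category.{v} C] [HasZeroObject C] [HasZeroMorphisms C]
    (s : MorphismOp C) where
  prj : ∀ {A B : C}, (A ⟶ B) → (A ⟶ A)
  prj_isProjection : ∀ {A B : C} (f : A ⟶ B), IsProjection s (prj f)
  prj_spec : ∀ {A B X : C} (f : A ⟶ B) (g : X ⟶ A),
    g ≫ f = 0 ↔ ∃ h : X ⟶ A, g = h ≫ prj f

/-- The natural partial order on projections: `e ≤ f` iff `e = e ∘ f`. -/
def ProjLe {A : C} (e f : A ⟶ A) : Prop := f ≫ e = e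

/-- `p` is the image of `g`: the smallest subobject of the codomain of `g` through
which `g` factors. -/
def IsImageOf {A B I : C} (p : I ⟶ B) (g : A ⟶ B) : Prop :=
  Mono p ∧ (∃ t : A ⟶ I, t ≫ p = g) ∧
  ∀ {S : C} (t : A ⟶ S) (m : S ⟶ B), Mono m → t ≫ m = g → ∃ w : I ⟶ S, w ≫ m = p

lemma comp_eq_id_of_idem_of_epi_of_mono {A I : C} {q : A ⟶ I} {p : I ⟶ A} [Epi q] [Mono p]
    (h : (q ≫ p) ≫ q ≫ p = q ≫ p) : p ≫ q = 𝟙 I := by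
  have h' : q ≫ (p ≫ q) ≫ p = q ≫ 𝟙 I ≫ p := by
    simpa only [Category.assoc, Category.id_comp] using h
  exact cancel_mono p |>.1 (cancel_epi q |>.1 h')

namespace IsInverseOp

variable {inv : MorphismOp C} (hinv : IsInverseOp inv)
include hinv

lemma eq_inv {A B : C} {f : A ⟶ B} {g : B ⟶ A} (h₁ : f ≫ g ≫ f = f) (h₂ : g ≫ f ≫ g = g) :
    g = inv f :=
  (hinv f).2 g h₁ h₂

lemma comp_inv_comp {A B : C} (f : A ⟶ B) : f ≫ inv f ≫ f = f := (hinv f).1.1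

lemma inv_comp_inv {A B : C} (f : A ⟶ B) : inv f ≫ f ≫ inv f = inv f := (hinv f).1.2

lemma inv_inv {A B : C} (f : A ⟶ B) : inv (inv f) = f :=
  (hinv.eq_inv (hinv.inv_comp_inv f) (hinv.comp_inv_comp f)).symm

lemma inv_eq_self_of_idem {A : C} {e : A ⟶ A} (he : e ≫ e = e) : inv e = e :=
  (hinv.eq_inv (by rw [he, he]) (by rw [he, he])).symm

lemma comp_inv_idem {A B : C} (f : A ⟶ B) : (f ≫ inv f) ≫ f ≫ inv f = f ≫ inv f := by
  rw [Category.assoc, hinv.inv_comp_inv]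

lemma inv_comp_idem {A B : C} (f : A ⟶ B) : (inv f ≫ f) ≫ inv f ≫ f = inv f ≫ f := by
  rw [Category.assoc, hinv.comp_inv_comp]

/-- With `x := inv (e ≫ f)`, uniqueness of generalized inverses gives `x = f ≫ x ≫ e`,
which makes `x` idempotent and hence equal to its own inverse `e ≫ f`. -/
lemma comp_idem {A : C} {e f : A ⟶ A} (he : e ≫ e = e) (hf : f ≫ f = f) :
    (e ≫ f) ≫ e ≫ f = e ≫ f := by
  set x := inv (e ≫ f)
  have hux : e ≫ f ≫ x ≫ e ≫ f = e ≫ f := by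
    simpa only [Category.assoc] using hinv.comp_inv_comp (e ≫ f)
  have hxu : x ≫ e ≫ f ≫ x = x := by
    simpa only [Category.assoc] using hinv.inv_comp_inv (e ≫ f)
  have hx : f ≫ x ≫ e = x := by
    apply hinv.eq_inv
    · calc (e ≫ f) ≫ (f ≫ x ≫ e) ≫ e ≫ f = e ≫ (f ≫ f) ≫ x ≫ (e ≫ e) ≫ f := by
            simp only [Category.assoc]
        _ = e ≫ f := by rw [hf, he, hux]
    · calc (f ≫ x ≫ e) ≫ (e ≫ f) ≫ f ≫ x ≫ e = f ≫ (x ≫ (e ≫ e) ≫ (f ≫ f) ≫ x) ≫ e := by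
            simp only [Category.assoc]
        _ = f ≫ x ≫ e := by rw [he, hf, hxu]
  have hx_idem : x ≫ x = x := by
    calc x ≫ x = (f ≫ x ≫ e) ≫ f ≫ x ≫ e := by rw [hx]
      _ = f ≫ (x ≫ e ≫ f ≫ x) ≫ e := by simp only [Category.assoc]
      _ = x := by rw [hxu, hx]
  have hux_eq : e ≫ f = x := by
    rw [← hinv.inv_inv (e ≫ f), hinv.inv_eq_self_of_idem hx_idem]
  rw [hux_eq, hx_idem]

lemma idem_comm {A : C} {e f : A ⟶ A} (he : e ≫ e = e) (hf : f ≫ f = f) :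
    e ≫ f = f ≫ e := by
  have hef := hinv.comp_idem he hf
  have hfe := hinv.comp_idem hf he
  have h : f ≫ e = inv (e ≫ f) := by
    apply hinv.eq_inv
    · calc (e ≫ f) ≫ (f ≫ e) ≫ e ≫ f = e ≫ (f ≫ f) ≫ (e ≫ e) ≫ f := by
            simp only [Category.assoc]
        _ = e ≫ f := by rw [hf, he, ← Category.assoc, hef]
    · calc (f ≫ e) ≫ (e ≫ f) ≫ f ≫ e = f ≫ (e ≫ e) ≫ (f ≫ f) ≫ e := by
            simp only [Category.assoc]
        _ = f ≫ e := by rw [he, hf, ← Category.assoc, hfe]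
  rw [h, hinv.inv_eq_self_of_idem hef]

lemma inv_comp {A B D : C} (f : A ⟶ B) (g : B ⟶ D) : inv (f ≫ g) = inv g ≫ inv f := by
  have hcomm : (g ≫ inv g) ≫ inv f ≫ f = (inv f ≫ f) ≫ g ≫ inv g :=
    hinv.idem_comm (hinv.comp_inv_idem g) (hinv.inv_comp_idem f)
  symm
  apply hinv.eq_inv
  · calc (f ≫ g) ≫ (inv g ≫ inv f) ≫ f ≫ g = f ≫ ((g ≫ inv g) ≫ inv f ≫ f) ≫ g := by
          simp only [Category.assoc]
      _ = f ≫ g := by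
          rw [hcomm]; simp only [Category.assoc]
          rw [hinv.comp_inv_comp g, reassoc_of% (hinv.comp_inv_comp f)]
  · calc (inv g ≫ inv f) ≫ (f ≫ g) ≫ inv g ≫ inv f
          = inv g ≫ ((inv f ≫ f) ≫ g ≫ inv g) ≫ inv f := by simp only [Category.assoc]
      _ = inv g ≫ inv f := by
          rw [← hcomm]; simp only [Category.assoc]
          rw [hinv.inv_comp_inv f, reassoc_of% (hinv.inv_comp_inv g)]

lemma inv_zero [HasZeroMorphisms C] (A B : C) : inv (0 : A ⟶ B) = 0 :=
  (hinv.eq_inv (by simp) (by simp)).symm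

lemma comp_inv_comp_idem_comp {A B : C} (f : A ⟶ B) {i : A ⟶ A} (hi : i ≫ i = i) :
    f ≫ inv f ≫ i ≫ f = i ≫ f := by
  have hcomm : i ≫ f ≫ inv f = f ≫ inv f ≫ i := by
    simpa only [Category.assoc] using hinv.idem_comm hi (hinv.comp_inv_idem f)
  calc f ≫ inv f ≫ i ≫ f = (f ≫ inv f ≫ i) ≫ f := by simp only [Category.assoc]
    _ = i ≫ f := by rw [← hcomm]; simp only [Category.assoc, hinv.comp_inv_comp f]

lemma isProjection_conj {A B : C} (f : A ⟶ B) {i : A ⟶ A} (hi : i ≫ i = i) :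
    IsProjection inv (inv f ≫ i ≫ f) := by
  have h : (inv f ≫ i ≫ f) ≫ inv f ≫ i ≫ f = inv f ≫ i ≫ f := by
    simp only [Category.assoc]
    rw [hinv.comp_inv_comp_idem_comp f hi, reassoc_of% hi]
  exact ⟨h, hinv.inv_eq_self_of_idem h⟩

lemma conj_comp_eq_self_iff {A B : C} (f : A ⟶ B) {i : A ⟶ A} (hi : i ≫ i = i)
    (g : B ⟶ B) : (inv f ≫ i ≫ f) ≫ g = inv f ≫ i ≫ f ↔ i ≫ f ≫ g = i ≫ f := by
  constructor
  · intro h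
    calc i ≫ f ≫ g = (f ≫ inv f ≫ i ≫ f) ≫ g := by
          rw [hinv.comp_inv_comp_idem_comp f hi, Category.assoc]
      _ = f ≫ (inv f ≫ i ≫ f) ≫ g := by simp only [Category.assoc]
      _ = i ≫ f := by rw [h, hinv.comp_inv_comp_idem_comp f hi]
  · intro h
    rw [Category.assoc, Category.assoc, h]

end IsInverseOp

namespace BaerStar

variable [HasZeroObject C] [HasZeroMorphisms C] {inv : MorphismOp C} (Bs : BaerStar C inv)

lemma prj_comp_self {A B : C} (f : A ⟶ B) : Bs.prj f ≫ f = 0 :=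
  (Bs.prj_spec f (Bs.prj f)).2 ⟨𝟙 A, (Category.id_comp _).symm⟩

lemma inv_prj {A B : C} (f : A ⟶ B) : inv (Bs.prj f) = Bs.prj f :=
  (Bs.prj_isProjection f).2

lemma comp_eq_zero_iff {A B X : C} (f : A ⟶ B) (g : X ⟶ A) :
    g ≫ f = 0 ↔ g ≫ Bs.prj f = g := by
  constructor
  · intro h
    obtain ⟨h', rfl⟩ := (Bs.prj_spec f g).1 h
    rw [Category.assoc, (Bs.prj_isProjection f).1]
  · intro h
    rw [← h, Category.assoc, Bs.prj_comp_self, comp_zero]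

lemma eq_prj_of_comp_eq_zero_iff (hinv : IsInverseOp inv) {A B : C} {f : A ⟶ B}
    {p : A ⟶ A} (hp : p ≫ p = p) (hspec : ∀ {X : C} (g : X ⟶ A), g ≫ f = 0 ↔ g ≫ p = g) :
    p = Bs.prj f := by
  have hpf : p ≫ Bs.prj f = p := (Bs.comp_eq_zero_iff f p).1 ((hspec p).2 hp)
  have hfp : Bs.prj f ≫ p = Bs.prj f := (hspec _).1 (Bs.prj_comp_self f)
  rw [← hpf, hinv.idem_comm hp (Bs.prj_isProjection f).1, hfp]

lemma inv_comp_prj (hinv : IsInverseOp inv) {A B : C} (f : A ⟶ B) :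
    inv f ≫ Bs.prj f = 0 := by
  have h : inv (Bs.prj f ≫ f) = inv f ≫ Bs.prj f := by
    rw [hinv.inv_comp, Bs.inv_prj]
  rw [← h, Bs.prj_comp_self, hinv.inv_zero]

lemma prj_prj_comp (hinv : IsInverseOp inv) {A B : C} (f : A ⟶ B) :
    Bs.prj (Bs.prj f) ≫ f = f := by
  have h := congrArg inv ((Bs.comp_eq_zero_iff _ _).1 (Bs.inv_comp_prj hinv f))
  rwa [hinv.inv_comp, hinv.inv_inv, Bs.inv_prj] at h

lemma prj_prj_prj (hinv : IsInverseOp inv) {A B : C} (f : A ⟶ B) :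
    Bs.prj (Bs.prj (Bs.prj f)) = Bs.prj f := by
  refine (Bs.eq_prj_of_comp_eq_zero_iff hinv (Bs.prj_isProjection f).1 fun g => ?_).symm
  rw [← Bs.comp_eq_zero_iff]
  constructor
  · intro h
    rw [← Bs.prj_prj_comp hinv f, ← Category.assoc, h, zero_comp]
  · intro h
    have hprj : Bs.prj f ≫ Bs.prj (Bs.prj f) = 0 := by
      simpa only [Bs.inv_prj] using Bs.inv_comp_prj hinv (Bs.prj f)
    rw [← (Bs.comp_eq_zero_iff f g).1 h, Category.assoc, hprj, comp_zero]

/-- Every projection is closed: splitting `j = q ≫ p` along its epi-mono factorization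
exhibits `j` as `g′` for a morphism `g` with kernel `p`, and `g′′′ = g′`. -/
lemma prj_prj_of_isProjection (hinv : IsInverseOp inv) (hC : IsExactCategory C) {B : C}
    {j : B ⟶ B} (hj : IsProjection inv j) : Bs.prj (Bs.prj j) = j := by
  obtain ⟨I, q, p, _, hp, rfl⟩ := hC.monoEpiFact j
  obtain ⟨D, g, hpg, hker⟩ := hC.normal p hp
  have hpq : p ≫ q = 𝟙 I := comp_eq_id_of_idem_of_epi_of_mono hj.1
  have hjg : q ≫ p = Bs.prj g := Bs.eq_prj_of_comp_eq_zero_iff hinv hj.1 fun x => by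
    constructor
    · intro hx
      obtain ⟨h, rfl, -⟩ := hker x hx
      rw [Category.assoc, reassoc_of% hpq]
    · intro hx
      rw [← hx, Category.assoc, Category.assoc, hpg, comp_zero, comp_zero]
  rw [hjg, Bs.prj_prj_prj hinv]

lemma comp_prj_comp_prj_eq_self_iff (hinv : IsInverseOp inv) (hC : IsExactCategory C)
    {A B X : C} (f : A ⟶ B) {j : B ⟶ B} (hj : IsProjection inv j) (g : X ⟶ A) :
    g ≫ Bs.prj (f ≫ Bs.prj j) = g ↔ g ≫ f ≫ j = g ≫ f := by
  rw [← Bs.comp_eq_zero_iff, ← Category.assoc, Bs.comp_eq_zero_iff,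
    Bs.prj_prj_of_isProjection hinv hC hj, Category.assoc]

end BaerStar

/-- The paper's `P(A)`. -/
def Proj (inv : MorphismOp C) (A : C) : Type v := {i : A ⟶ A // IsProjection inv i}

namespace Proj

variable {inv : MorphismOp C} [hinv : Fact (IsInverseOp inv)]

instance (A : C) : PartialOrder (Proj inv A) where
  le i j := ProjLe i.1 j.1
  le_refl i := i.2.1
  le_trans i j k (hij : j.1 ≫ i.1 = i.1) (hjk : k.1 ≫ j.1 = j.1) :=
    show k.1 ≫ i.1 = i.1 by rw [← hij, ← Category.assoc, hjk]
  le_antisymm i j (hij : j.1 ≫ i.1 = i.1) (hji : i.1 ≫ j.1 = j.1) :=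
    Subtype.ext <| by rw [← hij, IsInverseOp.idem_comm hinv.out j.2.1 i.2.1, hji]

lemma le_iff_comp_eq {A : C} (i j : Proj inv A) : i ≤ j ↔ i.1 ≫ j.1 = i.1 := by
  change j.1 ≫ i.1 = i.1 ↔ _
  rw [IsInverseOp.idem_comm hinv.out j.2.1 i.2.1]

/-- The paper's `P(f)`. -/
def image {A B : C} (f : A ⟶ B) (i : Proj inv A) : Proj inv B :=
  ⟨inv f ≫ i.1 ≫ f, IsInverseOp.isProjection_conj hinv.out f i.2.1⟩

/-- The paper's `P′(f)`. -/
def preimage [HasZeroObject C] [HasZeroMorphisms C] (Bs : BaerStar C inv) {A B : C}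
    (f : A ⟶ B) (j : Proj inv B) : Proj inv A :=
  ⟨Bs.prj (f ≫ Bs.prj j.1), Bs.prj_isProjection _⟩

theorem gc_image_preimage [HasZeroObject C] [HasZeroMorphisms C] (hC : IsExactCategory C)
    (Bs : BaerStar C inv) {A B : C} (f : A ⟶ B) :
    GaloisConnection (image f) (preimage Bs f) := fun i j => by
  rw [le_iff_comp_eq, le_iff_comp_eq]
  exact (IsInverseOp.conj_comp_eq_self_iff hinv.out f i.2.1 j.1).trans
    (Bs.comp_prj_comp_prj_eq_self_iff hinv.out hC f j.2 i.1).symm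

end Proj

/-- In an exact inverse category,
`P(f) ∘ P′(f) ∘ P(f) = P(f)` and `P′(f) ∘ P(f) ∘ P′(f) = P′(f)` as functions on
projections. -/
theorem stmt17 [HasZeroObject C] [HasZeroMorphisms C] (inv : MorphismOp C)
    (hinv : IsInverseOp inv) (hC : IsExactCategory C) (Bs : BaerStar C inv)
    {A B : C} (f : A ⟶ B) :
    (∀ i : A ⟶ A, IsProjection inv i →
      inv f ≫ (Bs.prj (f ≫ Bs.prj (inv f ≫ i ≫ f))) ≫ f = inv f ≫ i ≫ f) ∧
    (∀ j : B ⟶ B, IsProjection inv j →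
      Bs.prj (f ≫ Bs.prj (inv f ≫ (Bs.prj (f ≫ Bs.prj j)) ≫ f)) =
        Bs.prj (f ≫ Bs.prj j)) := by
  have : Fact (IsInverseOp inv) := ⟨hinv⟩
  have gc := Proj.gc_image_preimage hC Bs f
  exact ⟨fun i hi => congrArg Subtype.val (gc.l_u_l_eq_l ⟨i, hi⟩),
    fun j hj => congrArg Subtype.val (gc.u_l_u_eq_u ⟨j, hj⟩)⟩
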